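/- Suppose A is a coin sequence containing at least one heads-up coin and A' is obtained from A by removing a heads-up coin in the no-gaps game (remove a 1, flip neighbors, close the gap), and A' also contains at least one 1. Then S(A) ≡ 2 (mod 3) if and only if S(A') ≡ 2 (mod 3). -/

import Mathlib

/-- Flip the entry at index `j` (no-op if out of range). -/
def ngFlip (l : List Bool) (j : ℕ) : List Bool :=
  l.set j (!(l.getD j false))

/-- One move in the no-gaps linear coin-removal game: remove a `true` entry at
position `i`, flipping the adjacent entries (if they exist) and closing the gap. -/
def ngStep (A B : List Bool) : Prop :=
  ∃ i, i < A.length ∧ A.getD i false = true ∧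
    B = ((ngFlip (ngFlip A (i + 1)) (i - 1)).eraseIdx i)

/-- `Reducible A B`: some sequence of moves transforms `A` into `B`. -/
def Reducible : List Bool → List Bool → Prop :=
  Relation.ReflTransGen ngStep

/-- A sequence is removable if it reduces to the empty list. -/
def Removable (A : List Bool) : Prop :=
  Reducible A []


/-- Signed sum of the `true` entries of a list, the sign toggling at each `false`. -/
def signedSum : ℤ → List Bool → ℤ
  | _, [] => 0
  | s, (true :: l) => s + signedSum s l
  | s, (false :: l) => signedSum (-s) l

/-- The parity sum `S(A) = h₀ + ∑_{i=1}^n (-1)^{pᵢ} hᵢ - pₙ`, where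
`A = 1^{h₀} 0^{t₁} 1^{h₁} ⋯ 0^{tₙ} 1^{hₙ}` and `pᵢ ≡ t₁ + ⋯ + tᵢ (mod 2)`. -/
def pS (A : List Bool) : ℤ :=
  signedSum 1 A - ((A.count false % 2 : ℕ) : ℤ)

/-!
Modulo 3, `S(A) + 1` is the signed sum of the row in which each of its two ends also counts,
like a coin, with weight `-1` times the sign in force there (`endSignedSum`). This quantity is
additive under concatenation up to the sign reached at the junction. Checking the few possible
windows of a move shows that removing an interior coin changes it by a multiple of 3 without
changing the parity of the number of zeros, removing the last coin leaves it unchanged, and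
removing the first coin negates it. Hence `3 ∣ S(A) + 1` is invariant.
-/

theorem signedSum_neg (s : ℤ) (l : List Bool) : signedSum (-s) l = -signedSum s l := by
  induction l generalizing s with
  | nil => rfl
  | cons b l ih => cases b <;> simp [signedSum, ih, add_comm]

theorem signedSum_append (s : ℤ) (X Y : List Bool) :
    signedSum s (X ++ Y) = signedSum s X + (-1) ^ X.count false * signedSum s Y := by
  induction X generalizing s with
  | nil => simp [signedSum]
  | cons b X ih => cases b <;> simp [signedSum, ih, signedSum_neg, pow_succ, add_assoc]

def endSignedSum (A : List Bool) : ℤ :=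
  -1 + signedSum 1 A - (-1) ^ A.count false

theorem endSignedSum_append (L M : List Bool) :
    endSignedSum (L ++ M) = endSignedSum L + (-1) ^ L.count false * (endSignedSum M + 2) := by
  simp only [endSignedSum, signedSum_append, List.count_append, pow_add]
  ring

theorem pS_add_one_modEq (A : List Bool) : pS A + 1 ≡ endSignedSum A [ZMOD 3] := by
  rcases Nat.even_or_odd (A.count false) with h | h
  · rw [pS, endSignedSum, h.neg_one_pow, Nat.even_iff.1 h, Int.ModEq]
    omega
  · rw [pS, endSignedSum, h.neg_one_pow, Nat.odd_iff.1 h, Int.ModEq]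
    omega

theorem pS_emod_three_eq_two_iff (A : List Bool) : pS A % 3 = 2 ↔ 3 ∣ endSignedSum A := by
  rw [← (pS_add_one_modEq A).dvd_iff]
  omega

theorem ngFlip_append_of_length_le {L : List Bool} {j : ℕ} (h : L.length ≤ j) (l : List Bool) :
    ngFlip (L ++ l) j = L ++ ngFlip l (j - L.length) := by
  simp [ngFlip, List.set_append_right _ _ h, List.getD_eq_getElem?_getD,
    List.getElem?_append_right h]

theorem ngStep_cases {A A' : List Bool} (h : ngStep A A') :
    (A = [true] ∧ A' = []) ∨
    (∃ b R, A = true :: b :: R ∧ A' = (!b) :: R) ∨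
    (∃ L a, A = L ++ [a, true] ∧ A' = L ++ [!a]) ∨
    (∃ L a b R, A = L ++ [a, true, b] ++ R ∧ A' = L ++ [!a, !b] ++ R) := by
  obtain ⟨i, hi, hA, rfl⟩ := h
  obtain ⟨L, R, rfl, rfl⟩ : ∃ L R, A = L ++ true :: R ∧ L.length = i := by
    refine ⟨A.take i, A.drop (i + 1), ?_, by simp; omega⟩
    rw [List.getD_eq_getElem A false hi] at hA
    rw [← hA, ← List.drop_eq_getElem_cons hi, List.take_append_drop]
  rcases L.eq_nil_or_concat with rfl | ⟨L, a, rfl⟩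
  · rcases R with _ | ⟨b, R⟩ <;> simp [ngFlip]
  · have hsplit : L.concat a ++ true :: R = L ++ a :: true :: R := by simp
    rw [hsplit, L.length_concat, ngFlip_append_of_length_le (by omega),
      ngFlip_append_of_length_le (by omega), List.eraseIdx_append_of_length_le (by omega),
      show L.length + 1 + 1 - L.length = 2 by omega]
    right; right
    rcases R with _ | ⟨b, R⟩
    · exact .inl ⟨L, a, by simp, by simp [ngFlip]⟩
    · exact .inr ⟨L, a, b, R, by simp, by simp [ngFlip]⟩

theorem endSignedSum_remove_first (b : Bool) (R : List Bool) :
    endSignedSum ((!b) :: R) = -endSignedSum (true :: b :: R) := by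
  have hsum : endSignedSum [!b] = -endSignedSum [true, b] := by cases b <;> decide
  have hsign : (-1 : ℤ) ^ [!b].count false = -(-1) ^ [true, b].count false := by
    cases b <;> decide
  change endSignedSum ([!b] ++ R) = -endSignedSum ([true, b] ++ R)
  rw [endSignedSum_append, endSignedSum_append, hsum, hsign]
  ring

theorem endSignedSum_remove_last (L : List Bool) (a : Bool) :
    endSignedSum (L ++ [!a]) = endSignedSum (L ++ [a, true]) := by
  have hsum : endSignedSum [!a] = endSignedSum [a, true] := by cases a <;> decide
  rw [endSignedSum_append, endSignedSum_append, hsum]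

theorem endSignedSum_remove_interior (L : List Bool) (a b : Bool) (R : List Bool) :
    endSignedSum (L ++ [!a, !b] ++ R) ≡ endSignedSum (L ++ [a, true, b] ++ R) [ZMOD 3] := by
  have hsum : endSignedSum [!a, !b] ≡ endSignedSum [a, true, b] [ZMOD 3] := by
    cases a <;> cases b <;> decide
  have hsign : (-1 : ℤ) ^ [!a, !b].count false = (-1) ^ [a, true, b].count false := by
    cases a <;> cases b <;> decide
  simp only [endSignedSum_append, List.count_append, pow_add, hsign]
  gcongr

theorem pS_invariant_mod_three_general (A A' : List Bool) (hstep : ngStep A A') :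
    pS A % 3 = 2 ↔ pS A' % 3 = 2 := by
  rw [pS_emod_three_eq_two_iff, pS_emod_three_eq_two_iff]
  rcases ngStep_cases hstep with
    ⟨rfl, rfl⟩ | ⟨b, R, rfl, rfl⟩ | ⟨L, a, rfl, rfl⟩ | ⟨L, a, b, R, rfl, rfl⟩
  · decide
  · rw [endSignedSum_remove_first, dvd_neg]
  · rw [endSignedSum_remove_last]
  · exact (endSignedSum_remove_interior L a b R).dvd_iff.symm

/-- If `A'` is obtained from `A` by one move of the no-gaps game, and both
contain at least one `1`, then `S(A) ≡ 2 (mod 3)` iff `S(A') ≡ 2 (mod 3)`. -/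
theorem pS_invariant_mod_three (A A' : List Bool) (hA : true ∈ A) (hA' : true ∈ A')
    (hstep : ngStep A A') :
    pS A % 3 = 2 ↔ pS A' % 3 = 2 :=
  pS_invariant_mod_three_general A A' hstep
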